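/- More generally, if X : ℝ → M_n(ℝ) satisfies d^k X/dt^k ≡ 0 with k ≥ 2, then L = [X, Ẋ] satisfies d^{2k−3} L / dt^{2k−3} = 0; i.e., L is a constant of the motion of order at most 2k−3. -/

import Mathlib

attribute [local instance] Matrix.normedAddCommGroup Matrix.normedSpace

section Aux

variable {n : ℕ}

/-- Matrix multiplication as a continuous bilinear map (finite dimensions). -/
noncomputable def matMulCLM (n : ℕ) :
    Matrix (Fin n) (Fin n) ℝ →L[ℝ] Matrix (Fin n) (Fin n) ℝ →L[ℝ] Matrix (Fin n) (Fin n) ℝ :=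
  LinearMap.toContinuousLinearMap
    { toFun := fun a => LinearMap.toContinuousLinearMap (LinearMap.mul ℝ _ a)
      map_add' := by intro a b; ext x; simp [add_mul]
      map_smul' := by intro c a; ext x; simp [smul_mul_assoc] }

@[simp] lemma matMulCLM_apply (a b : Matrix (Fin n) (Fin n) ℝ) :
    matMulCLM n a b = a * b := rfl

lemma hasDerivAt_matMul {f g : ℝ → Matrix (Fin n) (Fin n) ℝ} {f' g' : Matrix (Fin n) (Fin n) ℝ}
    {t : ℝ} (hf : HasDerivAt f f' t) (hg : HasDerivAt g g' t) :
    HasDerivAt (fun s => f s * g s) (f' * g t + f t * g') t := by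
  have := ((matMulCLM n).isBoundedBilinearMap.hasFDerivAt (f t, g t)).comp_hasDerivAt t (hf.prodMk hg)
  simp only [Function.comp_def, IsBoundedBilinearMap.deriv_apply] at this
  exact this.congr_deriv (add_comm _ _)

lemma contDiff_matMul {f g : ℝ → Matrix (Fin n) (Fin n) ℝ}
    (hf : ContDiff ℝ (⊤ : ℕ∞) f) (hg : ContDiff ℝ (⊤ : ℕ∞) g) :
    ContDiff ℝ (⊤ : ℕ∞) fun s => f s * g s :=
  ((matMulCLM n).isBoundedBilinearMap.contDiff.of_le le_top).comp (hf.prodMk hg)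

lemma contDiff_bracket {f g : ℝ → Matrix (Fin n) (Fin n) ℝ}
    (hf : ContDiff ℝ (⊤ : ℕ∞) f) (hg : ContDiff ℝ (⊤ : ℕ∞) g) :
    ContDiff ℝ (⊤ : ℕ∞) fun s => ⁅f s, g s⁆ := by
  simp only [Ring.lie_def]
  exact (contDiff_matMul hf hg).sub (contDiff_matMul hg hf)

lemma hasDerivAt_bracket {f g : ℝ → Matrix (Fin n) (Fin n) ℝ}
    {f' g' : Matrix (Fin n) (Fin n) ℝ} {t : ℝ}
    (hf : HasDerivAt f f' t) (hg : HasDerivAt g g' t) :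
    HasDerivAt (fun s => ⁅f s, g s⁆) (⁅f', g t⁆ + ⁅f t, g'⁆) t := by
  simp only [Ring.lie_def]
  have := (hasDerivAt_matMul hf hg).sub (hasDerivAt_matMul hg hf)
  exact this.congr_deriv (by abel)

lemma iteratedDeriv_zero_fun {m : ℕ} {t : ℝ} :
    iteratedDeriv m (fun _ : ℝ => (0 : Matrix (Fin n) (Fin n) ℝ)) t = 0 := by
  induction m generalizing t with
  | zero => simp [iteratedDeriv_zero]
  | succ m ih =>
    rw [iteratedDeriv_succ']
    have : deriv (fun _ : ℝ => (0 : Matrix (Fin n) (Fin n) ℝ)) =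
        fun _ : ℝ => (0 : Matrix (Fin n) (Fin n) ℝ) := funext fun s => deriv_const s 0
    erw [this]
    exact ih

lemma iteratedDeriv_fun_add' {m : ℕ} {f g : ℝ → Matrix (Fin n) (Fin n) ℝ} {t : ℝ}
    (hf : ContDiff ℝ (m : ℕ∞) f) (hg : ContDiff ℝ (m : ℕ∞) g) :
    iteratedDeriv m (fun s => f s + g s) t = iteratedDeriv m f t + iteratedDeriv m g t := by
  have hf' : ContDiff ℝ (m : WithTop ℕ∞) f := by exact_mod_cast hf
  have hg' : ContDiff ℝ (m : WithTop ℕ∞) g := by exact_mod_cast hg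
  simp only [iteratedDeriv_eq_iteratedFDeriv]
  rw [show (fun s => f s + g s) = f + g from rfl, iteratedFDeriv_add_apply hf'.contDiffAt hg'.contDiffAt]
  rfl

end Aux

/-- If `d^k X/dt^k = 0` with `k ≥ 2`, then `L = [X, Ẋ]` is a constant of the motion of
order at most `2k - 3`: `d^(2k-3) L/dt^(2k-3) = 0`. -/
theorem angular_momentum_higher_order {n : ℕ} (X : ℝ → Matrix (Fin n) (Fin n) ℝ)
    (hX : ContDiff ℝ (⊤ : ℕ∞) X) (k : ℕ) (hk : 2 ≤ k) (hXk : ∀ t, iteratedDeriv k X t = 0) :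
    ∀ t, iteratedDeriv (2 * k - 3) (fun s => ⁅X s, deriv X s⁆) t = 0 := by
  have hX' : ContDiff ℝ (⊤ : ℕ∞) X := hX.of_le (by simp)
  -- smoothness of all iterated derivatives
  have hsm : ∀ a : ℕ, ContDiff ℝ (⊤ : ℕ∞) (iteratedDeriv a X) := by
    intro a
    rw [iteratedDeriv_eq_iterate]
    exact hX'.iterate_deriv a
  -- derivatives of order ≥ k vanish
  have hhigh : ∀ m : ℕ, k ≤ m → ∀ t, iteratedDeriv m X t = 0 := by
    intro m hm t
    obtain ⟨c, rfl⟩ := Nat.exists_eq_add_of_le hm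
    have hz : deriv^[k] X = fun _ : ℝ => (0 : Matrix (Fin n) (Fin n) ℝ) := by
      funext s
      erw [← iteratedDeriv_eq_iterate]
      exact hXk s
    erw [iteratedDeriv_eq_iterate, add_comm k c, Function.iterate_add_apply, hz,
      ← iteratedDeriv_eq_iterate]
    exact iteratedDeriv_zero_fun
  -- derivative of an iterated derivative
  have hder : ∀ (a : ℕ) (t : ℝ),
      HasDerivAt (iteratedDeriv a X) (iteratedDeriv (a + 1) X t) t := by
    intro a t
    have h := ((hsm a).differentiable (by simp) t).hasDerivAt
    rwa [← iteratedDeriv_succ] at h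
  -- main induction
  have main : ∀ (j a b : ℕ), 2 * k ≤ a + b + j + 2 → ∀ t,
      iteratedDeriv j (fun s => ⁅iteratedDeriv a X s, iteratedDeriv b X s⁆) t = 0 := by
    intro j
    induction j with
    | zero =>
      intro a b hab t
      rw [iteratedDeriv_zero]
      by_cases ha : k ≤ a
      · rw [hhigh a ha t]; simp [Ring.lie_def]
      by_cases hb : k ≤ b
      · rw [hhigh b hb t]; simp [Ring.lie_def]
      have hab' : a = b := by omega
      rw [hab']
      simp [Ring.lie_def]
    | succ j ih =>
      intro a b hab t
      rw [iteratedDeriv_succ']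
      have hD : deriv (fun s => ⁅iteratedDeriv a X s, iteratedDeriv b X s⁆) =
          fun s => ⁅iteratedDeriv (a + 1) X s, iteratedDeriv b X s⁆ +
            ⁅iteratedDeriv a X s, iteratedDeriv (b + 1) X s⁆ := by
        funext s
        exact (hasDerivAt_bracket (hder a s) (hder b s)).deriv
      erw [hD,
        iteratedDeriv_fun_add'
          ((contDiff_bracket (hsm (a + 1)) (hsm b)).of_le (by exact_mod_cast le_top))
          ((contDiff_bracket (hsm a) (hsm (b + 1))).of_le (by exact_mod_cast le_top)),
        ih (a + 1) b (by omega) t, ih a (b + 1) (by omega) t, add_zero]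
  intro t
  have := main (2 * k - 3) 0 1 (by omega) t
  rwa [iteratedDeriv_zero, iteratedDeriv_one] at this
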